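/- Fix integers N ≥ 1 and 0 ≤ n ≤ N−1 and reals α, β ∈ (−1/2,1/2) with α + β ≠ 0 and α ≠ β. Then for every x ∈ ℝ: g₆(x) + (2β/(α+β))·f₋^β(x) = g₂(x) + (β−α)·( g₄(x) + f₋^{−α}(x)/(α+β) ). -/
import Mathlib


open Complex

/-- Contour integral over the positively oriented circle of center `c`, radius `r`,
normalized by 1/(2πi). -/
noncomputable def cInt (c : ℂ) (r : ℝ) (f : ℂ → ℂ) : ℂ :=
  (2 * Real.pi * Complex.I)⁻¹ * ∮ z in C(c, r), f z

/-- `okCircle c r avoid`: the circle of (real) center `c` and radius `r` is a valid small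
contour: positive radius, not enclosing nor touching any point of `avoid`. -/
def okCircle (c r : ℝ) (avoid : List ℝ) : Prop := 0 < r ∧ ∀ p ∈ avoid, r < |c - p|

/-- Two circles with real centers are disjoint. -/
def disjC (c₁ r₁ c₂ r₂ : ℝ) : Prop := r₁ + r₂ < |c₁ - c₂|

/-- Φ(x,z) = e^{−xz}·((1/2+z)/(1/2−z))^{N−1}. -/
noncomputable def PhiF (N : ℕ) (x : ℝ) (z : ℂ) : ℂ :=
  Complex.exp (-(x : ℂ) * z) * (((1 / 2 : ℂ) + z) / ((1 / 2 : ℂ) - z)) ^ (N - 1)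

lemma ne_of_ok {c r : ℝ} {L : List ℝ} (h : okCircle c r L) {p : ℝ} (hp : p ∈ L)
    {z w : ℂ} (hw : w = (c : ℝ)) (hz : z ∈ Metric.closedBall w r) : z ≠ (p : ℂ) := by
  subst hw; rintro rfl
  have h1 := h.2 p hp
  have h2 := Metric.mem_closedBall.mp hz
  rw [Complex.isometry_ofReal.dist_eq, Real.dist_eq, abs_sub_comm] at h2
  linarith

lemma cInt_congr {c : ℂ} {r : ℝ} (hr : 0 ≤ r) {f g : ℂ → ℂ}
    (h : Set.EqOn f g (Metric.sphere c r)) : cInt c r f = cInt c r g := by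
  unfold cInt; rw [circleIntegral.integral_congr hr h]

lemma cInt_simple {c : ℂ} {r : ℝ} (hr : 0 < r) {g : ℂ → ℂ}
    (hg : ∀ z ∈ Metric.closedBall c r, DifferentiableAt ℂ g z) :
    cInt c r (fun z => g z / (z - c)) = g c := by
  unfold cInt
  rw [Complex.circleIntegral_div_sub_of_differentiable_on_off_countable Set.countable_empty
      (Metric.mem_ball_self hr) (fun z hz => (hg z hz).continuousAt.continuousWithinAt)
      (fun z hz => hg z (Metric.ball_subset_closedBall hz.1))]
  rw [inv_mul_cancel_left₀]
  exact mul_ne_zero (mul_ne_zero two_ne_zero (Complex.ofReal_ne_zero.mpr Real.pi_ne_zero))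
    Complex.I_ne_zero

lemma cInt_radius {c : ℂ} {f : ℂ → ℂ} {r R : ℝ} (h0 : 0 < r) (hle : r ≤ R)
    (hd : ∀ z ∈ Metric.closedBall c R, z ≠ c → DifferentiableAt ℂ f z) :
    cInt c R f = cInt c r f := by
  unfold cInt
  congr 1
  refine Complex.circleIntegral_eq_of_differentiable_on_annulus_off_countable h0 hle
    Set.countable_empty (fun z hz => ?_) (fun z hz => ?_)
  · exact (hd z hz.1 (fun he => hz.2 (he ▸ Metric.mem_ball_self h0))).continuousAt.continuousWithinAt
  · exact hd z (Metric.ball_subset_closedBall hz.1.1)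
      (fun he => hz.1.2 (he ▸ Metric.mem_closedBall_self h0.le))

lemma Hdiff (N n : ℕ) (x : ℝ) {z : ℂ} (h1 : z ≠ 1 / 2) (h2 : z ≠ -(1 / 2)) :
    DifferentiableAt ℂ (fun z : ℂ => PhiF N x z * ((1 / 2 : ℂ) + z)⁻¹ ^ n) z := by
  have hz2 : (1 / 2 : ℂ) - z ≠ 0 := sub_ne_zero.mpr (Ne.symm h1)
  have hz1 : (1 / 2 : ℂ) + z ≠ 0 := by intro h; exact h2 (by linear_combination h)
  have e1 : DifferentiableAt ℂ (fun z : ℂ => Complex.exp (-(x : ℂ) * z)) z :=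
    (differentiableAt_id.const_mul _).cexp
  have e2 : DifferentiableAt ℂ (fun z : ℂ => (((1 / 2 : ℂ) + z) / ((1 / 2 : ℂ) - z)) ^ (N - 1)) z :=
    (DifferentiableAt.div ((differentiableAt_const _).add differentiableAt_id)
      ((differentiableAt_const _).sub differentiableAt_id) hz2).pow _
  have e3 : DifferentiableAt ℂ (fun z : ℂ => ((1 / 2 : ℂ) + z)⁻¹ ^ n) z :=
    (DifferentiableAt.inv ((differentiableAt_const _).add differentiableAt_id) hz1).pow _
  exact (e1.mul e2).mul e3

lemma val1 {P a b : ℂ} (ha : a ≠ 0) : P * (2*a) / ((a+a)*(a-b)) = P / (a-b) := by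
  rw [show (a+a)*(a-b) = (a-b)*(2*a) from by ring,
    mul_div_mul_right _ _ (mul_ne_zero two_ne_zero ha)]

lemma val2 {P a b : ℂ} (ha : a ≠ 0) : P * (2 * -a) / ((-a-a)*(-a-b)) = -(P / (a+b)) := by
  rw [show P * (2 * -a) = (-P) * (2*a) from by ring,
    show (-a-a)*(-a-b) = (a+b)*(2*a) from by ring,
    mul_div_mul_right _ _ (mul_ne_zero two_ne_zero ha), neg_div]

lemma val3 {P a b : ℂ} : P * (2*b) / ((b-a)*(b+a)) = 2*b/(a+b) * P / (b-a) := by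
  rw [show (b-a)*(b+a) = (a+b)*(b-a) from by ring, ← div_div, div_mul_eq_mul_div]
  congr 1
  rw [mul_comm]

set_option maxHeartbeats 2000000 in
/-- g₆(x) + (2β/(α+β))·f₋^β(x) = g₂(x) + (β−α)·(g₄(x) + f₋^{−α}(x)/(α+β)),
with g₂ over Γ_{1/2,α}, g₄ over Γ_{1/2,α,−α,β} and g₆ over Γ_{1/2}. -/
theorem stmt8 (N : ℕ) (hN : 1 ≤ N) (n : ℕ) (hn : n ≤ N - 1)
    (α β : ℝ) (hα : α ∈ Set.Ioo (-(1 / 2) : ℝ) (1 / 2)) (hβ : β ∈ Set.Ioo (-(1 / 2) : ℝ) (1 / 2))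
    (hab : α + β ≠ 0) (hne : α ≠ β) (x : ℝ)
    -- radii for g₂ = ∮_{Γ_{1/2,α}}
    (ra rb : ℝ) (hra : okCircle (1 / 2) ra [α, -(1 / 2)]) (hrb : okCircle α rb [1 / 2, -(1 / 2)])
    (hab' : disjC (1 / 2) ra α rb)
    -- radii for g₄ = ∮_{Γ_{1/2,α,−α,β}}
    (rc rd re rf : ℝ)
    (hrc : okCircle (1 / 2) rc [-(1 / 2), α, -α, β]) (hrd : okCircle α rd [1 / 2, -(1 / 2), -α, β])
    (hre : okCircle (-α) re [1 / 2, -(1 / 2), α, β]) (hrf : okCircle β rf [1 / 2, -(1 / 2), α, -α])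
    (hcd : disjC (1 / 2) rc α rd) (hce : disjC (1 / 2) rc (-α) re) (hcf : disjC (1 / 2) rc β rf)
    (hde : disjC α rd (-α) re) (hdf : disjC α rd β rf) (hef : disjC (-α) re β rf)
    -- radius for g₆ = ∮_{Γ_{1/2}}
    (rg : ℝ) (hrg : okCircle (1 / 2) rg [-(1 / 2), α, -α, β, -β]) :
    -- g₆(x) + (2β/(α+β))·f₋^β(x)
    cInt (1 / 2) rg (fun z => PhiF N x z * ((1 / 2 : ℂ) + z)⁻¹ ^ n *
        (z + (β : ℂ)) / ((z + (α : ℂ)) * (z - (β : ℂ)))) +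
      (2 * (β : ℂ) / ((α : ℂ) + (β : ℂ))) * (PhiF N x β / ((1 / 2 : ℂ) + (β : ℂ)) ^ n) =
    -- g₂(x)
    (cInt (1 / 2) ra (fun z => PhiF N x z * ((1 / 2 : ℂ) + z)⁻¹ ^ n / (z - (α : ℂ))) +
        cInt (α : ℂ) rb (fun z => PhiF N x z * ((1 / 2 : ℂ) + z)⁻¹ ^ n / (z - (α : ℂ)))) +
      -- + (β−α)·(g₄(x) + f₋^{−α}(x)/(α+β))
      ((β : ℂ) - (α : ℂ)) *
        ((cInt (1 / 2) rc (fun z => PhiF N x z * ((1 / 2 : ℂ) + z)⁻¹ ^ n *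
              (2 * z) / ((z - (α : ℂ)) * (z + (α : ℂ)) * (z - (β : ℂ)))) +
            cInt (α : ℂ) rd (fun z => PhiF N x z * ((1 / 2 : ℂ) + z)⁻¹ ^ n *
              (2 * z) / ((z - (α : ℂ)) * (z + (α : ℂ)) * (z - (β : ℂ)))) +
            cInt (-(α : ℂ)) re (fun z => PhiF N x z * ((1 / 2 : ℂ) + z)⁻¹ ^ n *
              (2 * z) / ((z - (α : ℂ)) * (z + (α : ℂ)) * (z - (β : ℂ)))) +
            cInt (β : ℂ) rf (fun z => PhiF N x z * ((1 / 2 : ℂ) + z)⁻¹ ^ n *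
              (2 * z) / ((z - (α : ℂ)) * (z + (α : ℂ)) * (z - (β : ℂ))))) +
          PhiF N x (-α) / ((1 / 2 : ℂ) - (α : ℂ)) ^ n / ((α : ℂ) + (β : ℂ))) := by
  -- ### basic nonzero facts
  have hα0 : α ≠ 0 := by
    intro h0
    have h : rd + re < |α - -α| := hde
    rw [h0] at h
    norm_num at h
    linarith [hrd.1, hre.1]
  have hαC : (α : ℂ) ≠ 0 := Complex.ofReal_ne_zero.mpr hα0
  have habC : (α : ℂ) + β ≠ 0 := by
    rw [← Complex.ofReal_add]; exact Complex.ofReal_ne_zero.mpr hab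
  have hneC : (α : ℂ) - β ≠ 0 := by
    rw [← Complex.ofReal_sub]; exact Complex.ofReal_ne_zero.mpr (sub_ne_zero.mpr hne)
  have h12a : (1 / 2 : ℂ) - α ≠ 0 := by
    intro h
    have h' : ((1 / 2 - α : ℝ) : ℂ) = 0 := by push_cast; linear_combination h
    have := Complex.ofReal_eq_zero.mp h'
    linarith [hα.2]
  have h12b : (1 / 2 : ℂ) + β ≠ 0 := by
    intro h
    have h' : ((1 / 2 + β : ℝ) : ℂ) = 0 := by push_cast; linear_combination h
    have := Complex.ofReal_eq_zero.mp h'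
    linarith [hβ.1]
  have half_cast : (1 / 2 : ℂ) = ((1 / 2 : ℝ) : ℂ) := by norm_num
  have negα_cast : (-(α : ℂ)) = ((-α : ℝ) : ℂ) := by push_cast; ring
  have sphere_ne : ∀ {c : ℂ} {r : ℝ}, 0 < r → ∀ z ∈ Metric.sphere c r, z ≠ c := by
    intro c r hr z hz he
    rw [Metric.mem_sphere, he, dist_self] at hz
    exact hr.ne' hz.symm
  -- ### the common small radius around 1/2
  set ρ := min ra (min rc rg) with hρdef
  have hρ0 : 0 < ρ := lt_min hra.1 (lt_min hrc.1 hrg.1)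
  have hρa : ρ ≤ ra := min_le_left _ _
  have hρc : ρ ≤ rc := (min_le_right _ _).trans (min_le_left _ _)
  have hρg : ρ ≤ rg := (min_le_right _ _).trans (min_le_right _ _)
  -- ### avoidance facts for each closed ball
  have Bra : ∀ z ∈ Metric.closedBall (1 / 2 : ℂ) ra, z ≠ (α : ℂ) ∧ z ≠ -(1 / 2 : ℂ) := by
    intro z hz
    refine ⟨ne_of_ok hra (by simp) half_cast hz, ?_⟩
    have := ne_of_ok hra (show -(1 / 2 : ℝ) ∈ _ by simp) half_cast hz
    push_cast at this; exact this
  have Brc : ∀ z ∈ Metric.closedBall (1 / 2 : ℂ) rc,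
      z ≠ -(1 / 2 : ℂ) ∧ z ≠ (α : ℂ) ∧ z ≠ -(α : ℂ) ∧ z ≠ (β : ℂ) := by
    intro z hz
    refine ⟨?_, ne_of_ok hrc (by simp) half_cast hz, ?_, ne_of_ok hrc (by simp) half_cast hz⟩
    · have := ne_of_ok hrc (show -(1 / 2 : ℝ) ∈ _ by simp) half_cast hz
      push_cast at this; exact this
    · have := ne_of_ok hrc (show -α ∈ _ by simp) half_cast hz
      push_cast at this; exact this
  have Brg : ∀ z ∈ Metric.closedBall (1 / 2 : ℂ) rg,
      z ≠ -(1 / 2 : ℂ) ∧ z ≠ -(α : ℂ) ∧ z ≠ (β : ℂ) := by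
    intro z hz
    refine ⟨?_, ?_, ne_of_ok hrg (by simp) half_cast hz⟩
    · have := ne_of_ok hrg (show -(1 / 2 : ℝ) ∈ _ by simp) half_cast hz
      push_cast at this; exact this
    · have := ne_of_ok hrg (show -α ∈ _ by simp) half_cast hz
      push_cast at this; exact this
  have Brb : ∀ z ∈ Metric.closedBall (α : ℂ) rb, z ≠ (1 / 2 : ℂ) ∧ z ≠ -(1 / 2 : ℂ) := by
    intro z hz
    constructor
    · have := ne_of_ok hrb (show (1 / 2 : ℝ) ∈ _ by simp) rfl hz
      push_cast at this; exact this
    · have := ne_of_ok hrb (show -(1 / 2 : ℝ) ∈ _ by simp) rfl hz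
      push_cast at this; exact this
  have Brd : ∀ z ∈ Metric.closedBall (α : ℂ) rd,
      z ≠ (1 / 2 : ℂ) ∧ z ≠ -(1 / 2 : ℂ) ∧ z ≠ -(α : ℂ) ∧ z ≠ (β : ℂ) := by
    intro z hz
    refine ⟨?_, ?_, ?_, ne_of_ok hrd (by simp) rfl hz⟩
    · have := ne_of_ok hrd (show (1 / 2 : ℝ) ∈ _ by simp) rfl hz
      push_cast at this; exact this
    · have := ne_of_ok hrd (show -(1 / 2 : ℝ) ∈ _ by simp) rfl hz
      push_cast at this; exact this
    · have := ne_of_ok hrd (show -α ∈ _ by simp) rfl hz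
      push_cast at this; exact this
  have Bre : ∀ z ∈ Metric.closedBall (-(α : ℂ)) re,
      z ≠ (1 / 2 : ℂ) ∧ z ≠ -(1 / 2 : ℂ) ∧ z ≠ (α : ℂ) ∧ z ≠ (β : ℂ) := by
    intro z hz
    refine ⟨?_, ?_, ne_of_ok hre (by simp) negα_cast hz, ne_of_ok hre (by simp) negα_cast hz⟩
    · have := ne_of_ok hre (show (1 / 2 : ℝ) ∈ _ by simp) negα_cast hz
      push_cast at this; exact this
    · have := ne_of_ok hre (show -(1 / 2 : ℝ) ∈ _ by simp) negα_cast hz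
      push_cast at this; exact this
  have Brf : ∀ z ∈ Metric.closedBall (β : ℂ) rf,
      z ≠ (1 / 2 : ℂ) ∧ z ≠ -(1 / 2 : ℂ) ∧ z ≠ (α : ℂ) ∧ z ≠ -(α : ℂ) := by
    intro z hz
    refine ⟨?_, ?_, ne_of_ok hrf (by simp) rfl hz, ?_⟩
    · have := ne_of_ok hrf (show (1 / 2 : ℝ) ∈ _ by simp) rfl hz
      push_cast at this; exact this
    · have := ne_of_ok hrf (show -(1 / 2 : ℝ) ∈ _ by simp) rfl hz
      push_cast at this; exact this
    · have := ne_of_ok hrf (show -α ∈ _ by simp) rfl hz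
      push_cast at this; exact this
  -- ### name the three integrands
  set G2 : ℂ → ℂ := fun z => PhiF N x z * ((1 / 2 : ℂ) + z)⁻¹ ^ n / (z - (α : ℂ)) with hG2
  set G4 : ℂ → ℂ := fun z => PhiF N x z * ((1 / 2 : ℂ) + z)⁻¹ ^ n *
      (2 * z) / ((z - (α : ℂ)) * (z + (α : ℂ)) * (z - (β : ℂ))) with hG4
  set G6 : ℂ → ℂ := fun z => PhiF N x z * ((1 / 2 : ℂ) + z)⁻¹ ^ n *
      (z + (β : ℂ)) / ((z + (α : ℂ)) * (z - (β : ℂ))) with hG6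
  -- ### Cauchy formula on the circles around α, -α, β
  have Erb : cInt (α : ℂ) rb G2 = PhiF N x α * ((1 / 2 : ℂ) + α)⁻¹ ^ n := by
    refine cInt_simple hrb.1 fun z hz => ?_
    obtain ⟨h1, h2⟩ := Brb z hz
    exact Hdiff N n x h1 h2
  have Erd : cInt (α : ℂ) rd G4
      = PhiF N x α * ((1 / 2 : ℂ) + α)⁻¹ ^ n / ((α : ℂ) - β) := by
    have hfun : G4 = fun z => (PhiF N x z * ((1 / 2 : ℂ) + z)⁻¹ ^ n *
        (2 * z) / ((z + (α : ℂ)) * (z - (β : ℂ)))) / (z - (α : ℂ)) := by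
      funext z
      simp only [hG4]
      rw [div_div]
      congr 1
      ring
    rw [hfun]
    have hval := cInt_simple (c := (α : ℂ)) hrd.1 (g := fun z => PhiF N x z *
        ((1 / 2 : ℂ) + z)⁻¹ ^ n * (2 * z) / ((z + (α : ℂ)) * (z - (β : ℂ)))) ?_
    · rw [hval]
      beta_reduce
      exact val1 hαC
    · intro z hz
      obtain ⟨h1, h2, h3, h4⟩ := Brd z hz
      have n2 : z + (α : ℂ) ≠ 0 := fun h => h3 (by linear_combination h)
      have n3 : z - (β : ℂ) ≠ 0 := sub_ne_zero.mpr h4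
      exact DifferentiableAt.div ((Hdiff N n x h1 h2).mul (by fun_prop)) (by fun_prop)
        (mul_ne_zero n2 n3)
  have Ere : cInt (-(α : ℂ)) re G4
      = -(PhiF N x (-(α : ℂ)) * ((1 / 2 : ℂ) - (α : ℂ))⁻¹ ^ n / ((α : ℂ) + β)) := by
    have hfun : G4 = fun z => (PhiF N x z * ((1 / 2 : ℂ) + z)⁻¹ ^ n *
        (2 * z) / ((z - (α : ℂ)) * (z - (β : ℂ)))) / (z - -(α : ℂ)) := by
      funext z
      simp only [hG4]
      rw [div_div]
      congr 1
      ring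
    rw [hfun]
    have hval := cInt_simple (c := -(α : ℂ)) hre.1 (g := fun z => PhiF N x z *
        ((1 / 2 : ℂ) + z)⁻¹ ^ n * (2 * z) / ((z - (α : ℂ)) * (z - (β : ℂ)))) ?_
    · rw [hval]
      beta_reduce
      rw [show ((1 / 2 : ℂ) + -(α : ℂ)) = ((1 / 2 : ℂ) - (α : ℂ)) from by ring]
      exact val2 hαC
    · intro z hz
      obtain ⟨h1, h2, h3, h4⟩ := Bre z hz
      exact DifferentiableAt.div ((Hdiff N n x h1 h2).mul (by fun_prop)) (by fun_prop)
        (mul_ne_zero (sub_ne_zero.mpr h3) (sub_ne_zero.mpr h4))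
  have Erf : cInt (β : ℂ) rf G4
      = 2 * (β : ℂ) / ((α : ℂ) + β) * (PhiF N x β * ((1 / 2 : ℂ) + β)⁻¹ ^ n) / ((β : ℂ) - α) := by
    have hfun : G4 = fun z => (PhiF N x z * ((1 / 2 : ℂ) + z)⁻¹ ^ n *
        (2 * z) / ((z - (α : ℂ)) * (z + (α : ℂ)))) / (z - (β : ℂ)) := by
      funext z
      simp only [hG4]
      rw [div_div]
    rw [hfun]
    have hval := cInt_simple (c := (β : ℂ)) hrf.1 (g := fun z => PhiF N x z *
        ((1 / 2 : ℂ) + z)⁻¹ ^ n * (2 * z) / ((z - (α : ℂ)) * (z + (α : ℂ)))) ?_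
    · rw [hval]
      beta_reduce
      exact val3
    · intro z hz
      obtain ⟨h1, h2, h3, h4⟩ := Brf z hz
      have n1 : z - (α : ℂ) ≠ 0 := sub_ne_zero.mpr h3
      have n2 : z + (α : ℂ) ≠ 0 := fun h => h4 (by linear_combination h)
      exact DifferentiableAt.div ((Hdiff N n x h1 h2).mul (by fun_prop)) (by fun_prop)
        (mul_ne_zero n1 n2)
  -- ### shrink the circles around 1/2 to radius ρ
  have Era : cInt (1 / 2) ra G2 = cInt (1 / 2) ρ G2 := by
    refine cInt_radius hρ0 hρa fun z hz hzc => ?_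
    obtain ⟨h1, h2⟩ := Bra z hz
    exact DifferentiableAt.div (Hdiff N n x hzc h2) (by fun_prop) (sub_ne_zero.mpr h1)
  have Erc : cInt (1 / 2) rc G4 = cInt (1 / 2) ρ G4 := by
    refine cInt_radius hρ0 hρc fun z hz hzc => ?_
    obtain ⟨h2, h3, h4, h5⟩ := Brc z hz
    have n2 : z + (α : ℂ) ≠ 0 := fun h => h4 (by linear_combination h)
    exact DifferentiableAt.div ((Hdiff N n x hzc h2).mul (by fun_prop)) (by fun_prop)
      (mul_ne_zero (mul_ne_zero (sub_ne_zero.mpr h3) n2) (sub_ne_zero.mpr h5))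
  have Erg : cInt (1 / 2) rg G6 = cInt (1 / 2) ρ G6 := by
    refine cInt_radius hρ0 hρg fun z hz hzc => ?_
    obtain ⟨h2, h4, h5⟩ := Brg z hz
    have n2 : z + (α : ℂ) ≠ 0 := fun h => h4 (by linear_combination h)
    exact DifferentiableAt.div ((Hdiff N n x hzc h2).mul (by fun_prop)) (by fun_prop)
      (mul_ne_zero n2 (sub_ne_zero.mpr h5))
  -- ### partial fractions on the small circle
  have hsub : ∀ z ∈ Metric.sphere (1 / 2 : ℂ) ρ, z ∈ Metric.closedBall (1 / 2 : ℂ) ra ∧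
      z ∈ Metric.closedBall (1 / 2 : ℂ) rc ∧ z ∈ Metric.closedBall (1 / 2 : ℂ) rg := by
    intro z hz
    have h := Metric.sphere_subset_closedBall hz
    exact ⟨Metric.closedBall_subset_closedBall hρa h, Metric.closedBall_subset_closedBall hρc h,
      Metric.closedBall_subset_closedBall hρg h⟩
  have E4 : cInt (1 / 2) ρ G6 = cInt (1 / 2) ρ G2 + ((β : ℂ) - α) * cInt (1 / 2) ρ G4 := by
    have d2 : ∀ z ∈ Metric.sphere (1 / 2 : ℂ) ρ, DifferentiableAt ℂ G2 z := by
      intro z hz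
      obtain ⟨m1, m2, m3⟩ := hsub z hz
      obtain ⟨h1, h2⟩ := Bra z m1
      exact DifferentiableAt.div (Hdiff N n x (sphere_ne hρ0 z hz) h2) (by fun_prop)
        (sub_ne_zero.mpr h1)
    have d4 : ∀ z ∈ Metric.sphere (1 / 2 : ℂ) ρ, DifferentiableAt ℂ G4 z := by
      intro z hz
      obtain ⟨m1, m2, m3⟩ := hsub z hz
      obtain ⟨h2, h3, h4, h5⟩ := Brc z m2
      have n2 : z + (α : ℂ) ≠ 0 := fun h => h4 (by linear_combination h)
      exact DifferentiableAt.div ((Hdiff N n x (sphere_ne hρ0 z hz) h2).mul (by fun_prop))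
        (by fun_prop) (mul_ne_zero (mul_ne_zero (sub_ne_zero.mpr h3) n2) (sub_ne_zero.mpr h5))
    have d6 : ∀ z ∈ Metric.sphere (1 / 2 : ℂ) ρ, DifferentiableAt ℂ G6 z := by
      intro z hz
      obtain ⟨m1, m2, m3⟩ := hsub z hz
      obtain ⟨h2, h4, h5⟩ := Brg z m3
      have n2 : z + (α : ℂ) ≠ 0 := fun h => h4 (by linear_combination h)
      exact DifferentiableAt.div ((Hdiff N n x (sphere_ne hρ0 z hz) h2).mul (by fun_prop))
        (by fun_prop) (mul_ne_zero n2 (sub_ne_zero.mpr h5))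
    have i2 : CircleIntegrable G2 (1 / 2 : ℂ) ρ :=
      ContinuousOn.circleIntegrable hρ0.le fun z hz => (d2 z hz).continuousAt.continuousWithinAt
    have i4 : CircleIntegrable G4 (1 / 2 : ℂ) ρ :=
      ContinuousOn.circleIntegrable hρ0.le fun z hz => (d4 z hz).continuousAt.continuousWithinAt
    have i6 : CircleIntegrable G6 (1 / 2 : ℂ) ρ :=
      ContinuousOn.circleIntegrable hρ0.le fun z hz => (d6 z hz).continuousAt.continuousWithinAt
    have e1 := circleIntegral.integral_sub i6 i2
    have e2 : Set.EqOn (fun z => G6 z - G2 z) (fun z => ((β : ℂ) - α) • G4 z)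
        (Metric.sphere (1 / 2 : ℂ) ρ) := by
      intro z hz
      obtain ⟨m1, m2, m3⟩ := hsub z hz
      obtain ⟨h1, _⟩ := Bra z m1
      obtain ⟨_, _, h4, h5⟩ := Brc z m2
      have n1 : z - (α : ℂ) ≠ 0 := sub_ne_zero.mpr h1
      have n2 : z + (α : ℂ) ≠ 0 := fun h => h4 (by linear_combination h)
      have n3 : z - (β : ℂ) ≠ 0 := sub_ne_zero.mpr h5
      simp only [hG2, hG4, hG6, smul_eq_mul]
      set A := PhiF N x z * ((1 / 2 : ℂ) + z)⁻¹ ^ n with hA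
      field_simp
      ring
    have e3 : (∮ z in C((1 / 2 : ℂ), ρ), (G6 z - G2 z))
        = ((β : ℂ) - α) • ∮ z in C((1 / 2 : ℂ), ρ), G4 z := by
      rw [circleIntegral.integral_congr hρ0.le e2, circleIntegral.integral_smul]
    have e4 := e1.symm.trans e3
    rw [smul_eq_mul] at e4
    unfold cInt
    linear_combination (2 * (Real.pi : ℂ) * Complex.I)⁻¹ * e4
  -- ### assemble
  rw [Erg, Era, Erc, Erb, Erd, Ere, Erf, E4]
  rw [show ((α : ℂ) - (β : ℂ)) = -((β : ℂ) - (α : ℂ)) from by ring]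
  have h12c : (1 / 2 : ℂ) + α ≠ 0 := by
    intro h
    have h' : ((1 / 2 + α : ℝ) : ℂ) = 0 := by push_cast; linear_combination h
    have := Complex.ofReal_eq_zero.mp h'
    linarith [hα.1]
  simp only [inv_pow]
  set s := (β : ℂ) - (α : ℂ) with hs
  set t := (α : ℂ) + (β : ℂ) with ht
  set X := ((1 / 2 : ℂ) + (α : ℂ)) ^ n with hX
  set Y := ((1 / 2 : ℂ) + (β : ℂ)) ^ n with hY
  set Z := ((1 / 2 : ℂ) - (α : ℂ)) ^ n with hZ
  set Pa := PhiF N x ((α : ℂ)) with hPa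
  set Pb := PhiF N x ((β : ℂ)) with hPb
  set Pm := PhiF N x (-(α : ℂ)) with hPm
  set C2 := cInt (1 / 2) ρ G2 with hC2
  set C4 := cInt (1 / 2) ρ G4 with hC4
  have hs0 : s ≠ 0 := by rw [hs]; exact fun h => hneC (by linear_combination -h)
  have ht0 : t ≠ 0 := by rw [ht]; exact habC
  have hX0 : X ≠ 0 := by rw [hX]; exact pow_ne_zero _ h12c
  have hY0 : Y ≠ 0 := by rw [hY]; exact pow_ne_zero _ h12b
  have hZ0 : Z ≠ 0 := by rw [hZ]; exact pow_ne_zero _ h12a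
  clear_value s t X Y Z Pa Pb Pm C2 C4
  linear_combination (Pa * X⁻¹ - 2 * (β : ℂ) * t⁻¹ * Pb * Y⁻¹) * mul_inv_cancel₀ hs0
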